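/- Let 𝒢_i be the flow reduction of a DAG G_i with minimum flow f*_i and level assignment ℓ_i satisfying Invariants A and C. For each level l, the set A^l_i = { v ∈ V(G_i) : ℓ_i(v^in) ≤ l and ℓ_i(v^out) > l } is an antichain of G_i; moreover, for 0 ≤ l < l' ≤ M_i − 1, |A^l_i| > |A^{l'}_i|, i.e., the layered antichains are strictly size-decreasing. -/
import Mathlib


open Finset

section Prelude

variable {V : Type*}

/-- A (directed) path in the graph with edge relation `E`: nonempty, consecutive
vertices joined by edges, and vertices pairwise distinct. -/
def IsPathOn (E : V → V → Prop) (p : List V) : Prop :=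
  p ≠ [] ∧ p.Chain' E ∧ p.Nodup

/-- Reachability in the graph with edge relation `E`. -/
def Reaches (E : V → V → Prop) : V → V → Prop := Relation.ReflTransGen E

/-- The edges of a path, as the list of consecutive pairs of vertices. -/
def pathEdges (p : List V) : List (V × V) := p.zip p.tail

/-- A path cover: a multiset of paths such that every vertex is on some path. -/
def IsPathCover (E : V → V → Prop) (P : Multiset (List V)) : Prop :=
  (∀ p ∈ P, IsPathOn E p) ∧ ∀ v : V, ∃ p ∈ P, v ∈ p

/-- The width of a graph: the minimum size of a path cover. -/
noncomputable def gwidth (E : V → V → Prop) : ℕ :=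
  sInf {n | ∃ P : Multiset (List V), IsPathCover E P ∧ Multiset.card P = n}

/-- A DAG: no proper (directed) cycles. -/
def IsDAG (E : V → V → Prop) : Prop := ∀ v, ¬ Relation.TransGen E v v

/-- The edge relation of a finite edge set. -/
def edgeRel (E : Finset (V × V)) : V → V → Prop := fun a b => (a, b) ∈ E

/-- Multiplicity of an edge with respect to a multiset of paths. -/
def mult [DecidableEq V] (P : Multiset (List V)) (e : V × V) : ℕ :=
  Multiset.countP (fun p => e ∈ pathEdges p) P

/-- A flow network: a finite edge set, source, sink, and lower bounds (demands). -/
structure FlowNet (V : Type*) where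
  E : Finset (V × V)
  s : V
  t : V
  d : V × V → ℕ

/-- A flow: supported on edges, satisfying the demands, and flow conservation at
every vertex other than the source and the sink. -/
def IsFlow [Fintype V] (N : FlowNet V) (f : V × V → ℕ) : Prop :=
  (∀ e, e ∉ N.E → f e = 0) ∧ (∀ e ∈ N.E, N.d e ≤ f e) ∧
  ∀ v : V, v ≠ N.s → v ≠ N.t → (∑ u : V, f (u, v)) = ∑ u : V, f (v, u)

/-- The size of a flow: net outflow at the source. -/
def flowSize [Fintype V] (N : FlowNet V) (f : V × V → ℕ) : ℤ :=
  (∑ u : V, (f (N.s, u) : ℤ)) - ∑ u : V, (f (u, N.s) : ℤ)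

/-- An `st`-cut, given by the source side `S` (the sink side is the complement). -/
def IsCut (N : FlowNet V) (S : Set V) : Prop := N.s ∈ S ∧ N.t ∉ S

/-- A one-way cut: a cut with no edge crossing from `T = Sᶜ` to `S`. -/
def IsOwCut (N : FlowNet V) (S : Set V) : Prop :=
  IsCut N S ∧ ∀ e ∈ N.E, e.1 ∉ S → e.2 ∉ S

open Classical in
/-- The demand of a cut: sum of demands of edges crossing from `S` to `T`. -/
noncomputable def cutDemand (N : FlowNet V) (S : Set V) : ℕ :=
  ∑ e ∈ N.E.filter (fun e => e.1 ∈ S ∧ e.2 ∉ S), N.d e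

open Classical in
/-- The net flow across a cut: flow from `S` to `T` minus flow from `T` to `S`. -/
noncomputable def cutFlow (N : FlowNet V) (S : Set V) (f : V × V → ℕ) : ℤ :=
  (∑ e ∈ N.E.filter (fun e => e.1 ∈ S ∧ e.2 ∉ S), (f e : ℤ))
    - ∑ e ∈ N.E.filter (fun e => e.1 ∉ S ∧ e.2 ∈ S), (f e : ℤ)

/-- The residual graph of a network w.r.t. a flow `f`: reverse edges of all edges,
plus the edges whose flow strictly exceeds the demand. -/
def ResidualEdge (N : FlowNet V) (f : V × V → ℕ) (u v : V) : Prop :=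
  (v, u) ∈ N.E ∨ ((u, v) ∈ N.E ∧ N.d (u, v) < f (u, v))

/-- Vertices of the flow reduction: two copies of each vertex, plus source/sink. -/
abbrev FR (V : Type*) := (V ⊕ V) ⊕ Bool

def vinF (v : V) : FR V := Sum.inl (Sum.inl v)
def voutF (v : V) : FR V := Sum.inl (Sum.inr v)
def fsrc : FR V := Sum.inr false
def fsnk : FR V := Sum.inr true

/-- Demands of the flow reduction: `1` on each edge `(vin v, vout v)`, else `0`. -/
def redD [DecidableEq V] : FR V × FR V → ℕ
  | (Sum.inl (Sum.inl a), Sum.inl (Sum.inr b)) => if a = b then 1 else 0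
  | _ => 0

/-- The flow reduction of the DAG with edge set `E`. -/
def redNet [Fintype V] [DecidableEq V] (E : Finset (V × V)) : FlowNet (FR V) where
  E := (univ.image fun v : V => (fsrc, vinF v)) ∪ (univ.image fun v : V => (voutF v, fsnk))
        ∪ (univ.image fun v : V => (vinF v, voutF v))
        ∪ (E.image fun e => (voutF e.1, vinF e.2))
  s := fsrc
  t := fsnk
  d := redD

/-- The layered cut `L^{≤ l}`: the source together with all split vertices of level `≤ l`. -/
def layerCut (ℓ : FR V → ℤ) (l : ℤ) : Set (FR V) :=
  {x | x = fsrc ∨ ((∃ v : V, x = vinF v ∨ x = voutF v) ∧ ℓ x ≤ l)}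

open Classical in
/-- The layered antichain `A^l`. -/
noncomputable def layerAntichain [Fintype V] (ℓ : FR V → ℤ) (l : ℤ) : Finset V :=
  univ.filter (fun v => ℓ (vinF v) ≤ l ∧ l < ℓ (voutF v))

end Prelude

section Aux

variable {V : Type*} [Fintype V] [DecidableEq V]

lemma split_mem (E : Finset (V × V)) (v : V) : (vinF v, voutF v) ∈ (redNet E).E := by
  simp only [redNet, mem_union, mem_image, mem_univ]
  left; right
  exact ⟨v, trivial, rfl⟩

lemma rev_mem (E : Finset (V × V)) {a b : V} (h : (a, b) ∈ E) :
    (voutF a, vinF b) ∈ (redNet E).E := by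
  simp only [redNet, mem_union, mem_image]
  right
  exact ⟨(a, b), h, rfl⟩

lemma mem_layerCut_vin (ℓ : FR V → ℤ) (l : ℤ) (v : V) :
    vinF v ∈ layerCut ℓ l ↔ ℓ (vinF v) ≤ l := by
  simp [layerCut, vinF, voutF, fsrc, Set.mem_setOf_eq]

lemma mem_layerCut_vout (ℓ : FR V → ℤ) (l : ℤ) (v : V) :
    voutF v ∈ layerCut ℓ l ↔ ℓ (voutF v) ≤ l := by
  simp [layerCut, vinF, voutF, fsrc, Set.mem_setOf_eq]

lemma cutDemand_eq_card (E : Finset (V × V)) (ℓ : FR V → ℤ) (l : ℤ) :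
    cutDemand (redNet E) (layerCut ℓ l) = (layerAntichain ℓ l).card := by
  classical
  unfold cutDemand
  set P : FR V × FR V → Prop := fun e => e.1 ∈ layerCut ℓ l ∧ e.2 ∉ layerCut ℓ l with hP
  set A := layerAntichain ℓ l with hA
  set g : V → FR V × FR V := fun v => (vinF v, voutF v) with hg
  have hginj : Set.InjOn g A := by
    intro a _ b _ hab
    simpa [g, vinF, voutF, Prod.ext_iff] using hab
  have hsub : A.image g ⊆ (redNet E).E.filter (fun e => P e) := by
    intro e he
    rcases Finset.mem_image.1 he with ⟨v, hv, rfl⟩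
    have hv' := Finset.mem_filter.1 hv
    refine Finset.mem_filter.2 ⟨split_mem E v, ?_, ?_⟩
    · exact (mem_layerCut_vin ℓ l v).2 hv'.2.1
    · rw [mem_layerCut_vout]; exact not_le.2 hv'.2.2
  have hzero : ∀ e ∈ (redNet E).E.filter (fun e => P e), e ∉ A.image g →
      (redNet E).d e = 0 := by
    intro e he hni
    have he' := Finset.mem_filter.1 he
    have heE := he'.1
    simp only [redNet, mem_union, mem_image, mem_univ, true_and] at heE
    rcases heE with ((⟨v, rfl⟩ | ⟨v, rfl⟩) | ⟨v, _, rfl⟩) | ⟨⟨a, b⟩, _, rfl⟩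
    · rfl
    · rfl
    · exfalso
      apply hni
      refine Finset.mem_image.2 ⟨v, ?_, rfl⟩
      have h1 := (mem_layerCut_vin ℓ l v).1 he'.2.1
      have h2 : ¬ ℓ (voutF v) ≤ l := fun h => he'.2.2 ((mem_layerCut_vout ℓ l v).2 h)
      exact Finset.mem_filter.2 ⟨mem_univ v, h1, not_le.1 h2⟩
    · rfl
  calc ∑ e ∈ (redNet E).E.filter (fun e => P e), (redNet E).d e
      = ∑ e ∈ A.image g, (redNet E).d e := (Finset.sum_subset hsub (fun e h1 h2 => hzero e h1 h2)).symm
    _ = ∑ v ∈ A, (redNet E).d (g v) := Finset.sum_image (fun a ha b hb h => hginj ha hb h)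
    _ = ∑ v ∈ A, 1 := by
        refine Finset.sum_congr rfl fun v _ => ?_
        simp [g, redNet, redD, vinF, voutF]
    _ = A.card := by simp

end Aux

/-- under Invariants A and C, each layered antichain `A^l` is an
antichain of the DAG, and for `0 ≤ l < l' ≤ M - 1` the sizes strictly decrease. -/
theorem stmt_18 {V : Type*} [Fintype V] [DecidableEq V] (E : Finset (V × V))
    (f : FR V × FR V → ℕ) (hf : IsFlow (redNet E) f)
    (hmin : ∀ g, IsFlow (redNet E) g → flowSize (redNet E) f ≤ flowSize (redNet E) g)
    (ℓ : FR V → ℤ) (hnn : ∀ v : V, 0 ≤ ℓ (vinF v) ∧ 0 ≤ ℓ (voutF v))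
    (invA : ∀ x y : FR V, ResidualEdge (redNet E) f x y →
      x ≠ fsrc → x ≠ fsnk → y ≠ fsrc → y ≠ fsnk → ℓ y ≤ ℓ x)
    (M : ℕ)
    (invC : ∀ l l' : ℤ, 0 ≤ l → l < l' → l' ≤ (M : ℤ) - 1 →
      cutDemand (redNet E) (layerCut ℓ l') < cutDemand (redNet E) (layerCut ℓ l)) :
    (∀ l : ℤ, ∀ u ∈ layerAntichain ℓ l, ∀ w ∈ layerAntichain ℓ l,
      u ≠ w → ¬ Reaches (edgeRel E) u w) ∧
    ∀ l l' : ℤ, 0 ≤ l → l < l' → l' ≤ (M : ℤ) - 1 →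
      (layerAntichain ℓ l').card < (layerAntichain ℓ l).card := by
  have hninj : ∀ x : FR V, ∀ b : Bool, x = Sum.inr b → (∀ v : V, x ≠ vinF v ∧ x ≠ voutF v) := by
    intro x b hx v
    subst hx
    exact ⟨by simp [vinF], by simp [voutF]⟩
  have hns : ∀ v : V, vinF v ≠ fsrc ∧ vinF v ≠ fsnk ∧ voutF v ≠ fsrc ∧ voutF v ≠ fsnk := by
    intro v
    refine ⟨?_, ?_, ?_, ?_⟩ <;> simp [vinF, voutF, fsrc, fsnk]
  -- level monotonicity facts from Invariant A
  have hsplit : ∀ v : V, ℓ (vinF v) ≤ ℓ (voutF v) := by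
    intro v
    have hres : ResidualEdge (redNet E) f (voutF v) (vinF v) := Or.inl (split_mem E v)
    exact invA _ _ hres (hns v).2.2.1 (hns v).2.2.2 (hns v).1 (hns v).2.1
  have hedge : ∀ a b : V, (a, b) ∈ E → ℓ (voutF a) ≤ ℓ (vinF b) := by
    intro a b hab
    have hres : ResidualEdge (redNet E) f (vinF b) (voutF a) := Or.inl (rev_mem E hab)
    exact invA _ _ hres (hns b).1 (hns b).2.1 (hns a).2.2.1 (hns a).2.2.2
  have hreach : ∀ u w : V, Relation.TransGen (edgeRel E) u w → ℓ (voutF u) ≤ ℓ (vinF w) := by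
    intro u w h
    induction h with
    | single h => exact hedge _ _ h
    | tail _ h ih => exact le_trans ih (le_trans (hsplit _) (hedge _ _ h))
  constructor
  · intro l u hu w hw huw hr
    rcases (Relation.reflTransGen_iff_eq_or_transGen.1 hr) with h | h
    · exact huw h.symm
    · have hu' := Finset.mem_filter.1 hu
      have hw' := Finset.mem_filter.1 hw
      have := hreach u w h
      omega
  · intro l l' h0 hll hM
    have h1 := invC l l' h0 hll hM
    rwa [cutDemand_eq_card, cutDemand_eq_card] at h1
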